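/- Let η ∈ ℤ^{2m} with q(η) ≠ 0, and let k, k' be as in the context. Then for every integer r with k < r ≤ k + k', B_r(η) = Σ_{j=0}^{k} p^{rm−r+jm} (p^{r−j} − p^{r−j−1}). -/

import Mathlib

open scoped BigOperators

/-- `exp(2πi c / n)` for `c ∈ ℤ/nℤ`. -/
noncomputable def eZMod (n : ℕ) (c : ZMod n) : ℂ :=
  Complex.exp (2 * Real.pi * Complex.I * (c.val : ℂ) / (n : ℂ))

section helpers

variable {n : ℕ} [NeZero n]

lemma eZMod_natCast (x : ℕ) :
    eZMod n (x : ZMod n) = Complex.exp (2 * Real.pi * Complex.I * x / n) := by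
  have hn : (n : ℂ) ≠ 0 := by exact_mod_cast NeZero.ne n
  unfold eZMod
  rw [ZMod.val_natCast]
  conv_rhs => rw [← Nat.div_add_mod x n]
  rw [Nat.cast_add, Nat.cast_mul]
  rw [show (2 : ℂ) * Real.pi * Complex.I * ((n : ℂ) * ((x / n : ℕ) : ℂ) + ((x % n : ℕ) : ℂ)) / n
      = 2 * Real.pi * Complex.I * ((x / n : ℕ) : ℂ) * ((n : ℂ) / n)
        + 2 * Real.pi * Complex.I * ((x % n : ℕ) : ℂ) / n by ring]
  rw [div_self hn, mul_one, Complex.exp_add]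
  rw [show (2 : ℂ) * Real.pi * Complex.I * ((x / n : ℕ) : ℂ)
      = ((x / n : ℕ) : ℂ) * (2 * Real.pi * Complex.I) by ring]
  rw [Complex.exp_nat_mul, Complex.exp_two_pi_mul_I, one_pow, one_mul]

lemma eZMod_zero : eZMod n (0 : ZMod n) = 1 := by
  unfold eZMod
  simp

lemma eZMod_ne_zero (c : ZMod n) : eZMod n c ≠ 0 := Complex.exp_ne_zero _

lemma eZMod_add (x y : ZMod n) : eZMod n (x + y) = eZMod n x * eZMod n y := by
  rw [← ZMod.natCast_zmod_val x, ← ZMod.natCast_zmod_val y, ← Nat.cast_add,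
    eZMod_natCast, eZMod_natCast, eZMod_natCast, ← Complex.exp_add]
  congr 1
  push_cast
  ring

lemma eZMod_sum {ι : Type*} (s : Finset ι) (f : ι → ZMod n) :
    eZMod n (∑ i ∈ s, f i) = ∏ i ∈ s, eZMod n (f i) := by
  classical
  induction s using Finset.induction_on with
  | empty => simpa using eZMod_zero
  | insert _ _ h ih => rw [Finset.sum_insert h, Finset.prod_insert h, eZMod_add, ih]

lemma eZMod_eq_one_of_eq_zero {c : ZMod n} (h : c = 0) : eZMod n c = 1 := by
  rw [h]; exact eZMod_zero

lemma sum_eZMod_mul (c : ZMod n) :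
    ∑ t : ZMod n, eZMod n (t * c) = if c = 0 then (n : ℂ) else 0 := by
  have hn : (n : ℂ) ≠ 0 := by exact_mod_cast NeZero.ne n
  split_ifs with h
  · subst h
    simp only [mul_zero, eZMod_zero]
    simp [Finset.card_univ, ZMod.card]
  · set z := Complex.exp (2 * Real.pi * Complex.I * (c.val : ℂ) / n) with hz
    have hterm : ∀ t : ZMod n, eZMod n (t * c) = z ^ t.val := by
      intro t
      have hmul : t * c = ((t.val * c.val : ℕ) : ZMod n) := by
        rw [Nat.cast_mul, ZMod.natCast_zmod_val, ZMod.natCast_zmod_val]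
      rw [hmul, eZMod_natCast, hz, ← Complex.exp_nat_mul]
      congr 1
      push_cast
      ring
    have hreindex : ∑ t : ZMod n, eZMod n (t * c) = ∑ i ∈ Finset.range n, z ^ i := by
      rw [Finset.sum_congr rfl fun t _ => hterm t]
      exact Finset.sum_nbij' (fun t : ZMod n => t.val) (fun i => (i : ZMod n))
        (fun t _ => Finset.mem_range.mpr t.val_lt)
        (fun i _ => Finset.mem_univ _)
        (fun t _ => ZMod.natCast_zmod_val t)
        (fun i hi => ZMod.val_natCast_of_lt (Finset.mem_range.mp hi))
        (fun t _ => rfl)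
    have hz1 : z ≠ 1 := by
      intro hzeq
      rw [hz] at hzeq
      obtain ⟨nn, hnn⟩ := Complex.exp_eq_one_iff.mp hzeq
      have h2pi : (2 * (Real.pi : ℂ) * Complex.I) ≠ 0 :=
        mul_ne_zero (mul_ne_zero two_ne_zero (Complex.ofReal_ne_zero.mpr Real.pi_ne_zero))
          Complex.I_ne_zero
      rw [div_eq_iff hn] at hnn
      have hcv : (c.val : ℂ) = (nn : ℂ) * n :=
        mul_left_cancel₀ h2pi (by linear_combination hnn)
      have hcvz : (c.val : ℤ) = nn * n := by exact_mod_cast hcv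
      have hdvd : (n : ℤ) ∣ (c.val : ℤ) := ⟨nn, by linarith [hcvz]⟩
      have hdn : n ∣ c.val := Int.ofNat_dvd.mp hdvd
      have hv0 : c.val = 0 := Nat.eq_zero_of_dvd_of_lt hdn c.val_lt
      exact h (by rwa [ZMod.val_eq_zero] at hv0)
    have hzn : z ^ n = 1 := by
      rw [hz, ← Complex.exp_nat_mul]
      have : (n : ℂ) * (2 * Real.pi * Complex.I * (c.val : ℂ) / n) =
          (c.val : ℤ) * (2 * Real.pi * Complex.I) := by
        push_cast; field_simp
      rw [this, Complex.exp_int_mul_two_pi_mul_I]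
    rw [hreindex, geom_sum_eq hz1, hzn, sub_self, zero_div]

end helpers

section helpers2

variable {n : ℕ} [NeZero n]

lemma card_dvd_val_filter {d e : ℕ} (hde : n = d * e) :
    (Finset.univ.filter fun y : ZMod n => d ∣ y.val).card = e := by
  have hn : n ≠ 0 := NeZero.ne n
  have hd : d ≠ 0 := by rintro rfl; exact hn (by simp [hde])
  rw [show e = (Finset.range e).card from (Finset.card_range e).symm]
  apply Finset.card_nbij' (fun y : ZMod n => y.val / d) (fun c : ℕ => ((c * d : ℕ) : ZMod n))
  · intro y hy
    simp only [Finset.mem_coe, Finset.mem_filter, Finset.mem_univ, true_and] at hy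
    apply Finset.mem_range.mpr
    rw [Nat.div_lt_iff_lt_mul (Nat.pos_of_ne_zero hd)]
    calc y.val < n := y.val_lt
    _ = e * d := by rw [hde, mul_comm]
  · intro c hc
    simp only [Finset.mem_coe, Finset.mem_filter, Finset.mem_univ, true_and]
    rw [ZMod.val_natCast_of_lt]
    · exact ⟨c, mul_comm c d⟩
    · calc c * d < e * d :=
            (Nat.mul_lt_mul_right (Nat.pos_of_ne_zero hd)).mpr (Finset.mem_range.mp hc)
      _ = n := by rw [hde, mul_comm]
  · intro y hy
    simp only [Finset.mem_coe, Finset.mem_filter, Finset.mem_univ, true_and] at hy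
    dsimp only
    rw [Nat.div_mul_cancel hy, ZMod.natCast_zmod_val]
  · intro c hc
    dsimp only
    rw [ZMod.val_natCast_of_lt, Nat.mul_div_cancel _ (Nat.pos_of_ne_zero hd)]
    calc c * d < e * d :=
          (Nat.mul_lt_mul_right (Nat.pos_of_ne_zero hd)).mpr (Finset.mem_range.mp hc)
    _ = n := by rw [hde, mul_comm]

noncomputable def Ssum (n : ℕ) [NeZero n] (t A B : ZMod n) : ℂ :=
  ∑ x : ZMod n, ∑ y : ZMod n, eZMod n (t * x * y + A * y + B * x)

lemma Ssum_eval_y (t A B : ZMod n) :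
    Ssum n t A B = ∑ x : ZMod n,
      if t * x + A = 0 then (n : ℂ) * eZMod n (B * x) else 0 := by
  unfold Ssum
  refine Finset.sum_congr rfl fun x _ => ?_
  have h1 : ∀ y : ZMod n, t * x * y + A * y + B * x = y * (t * x + A) + B * x := by
    intro y; ring
  calc ∑ y : ZMod n, eZMod n (t * x * y + A * y + B * x)
      = ∑ y : ZMod n, eZMod n (y * (t * x + A)) * eZMod n (B * x) := by
        refine Finset.sum_congr rfl fun y _ => ?_
        rw [h1 y, eZMod_add]
    _ = (∑ y : ZMod n, eZMod n (y * (t * x + A))) * eZMod n (B * x) := by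
        rw [Finset.sum_mul]
    _ = (if t * x + A = 0 then (n : ℂ) else 0) * eZMod n (B * x) := by
        rw [sum_eZMod_mul]
    _ = _ := by split_ifs <;> simp

lemma Ssum_eval_x (t A B : ZMod n) :
    Ssum n t A B = ∑ y : ZMod n,
      if t * y + B = 0 then (n : ℂ) * eZMod n (A * y) else 0 := by
  unfold Ssum
  rw [Finset.sum_comm]
  refine Finset.sum_congr rfl fun y _ => ?_
  calc ∑ x : ZMod n, eZMod n (t * x * y + A * y + B * x)
      = ∑ x : ZMod n, eZMod n (x * (t * y + B)) * eZMod n (A * y) := by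
        refine Finset.sum_congr rfl fun x _ => ?_
        rw [← eZMod_add]; congr 1; ring
    _ = (∑ x : ZMod n, eZMod n (x * (t * y + B))) * eZMod n (A * y) := by
        rw [Finset.sum_mul]
    _ = (if t * y + B = 0 then (n : ℂ) else 0) * eZMod n (A * y) := by
        rw [sum_eZMod_mul]
    _ = _ := by split_ifs <;> simp

lemma Ssum_eq_zero_left {t A : ZMod n} (B : ZMod n) (h : ∀ x, t * x + A ≠ 0) :
    Ssum n t A B = 0 := by
  rw [Ssum_eval_y]
  exact Finset.sum_eq_zero fun x _ => by rw [if_neg (h x)]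

lemma Ssum_eq_zero_right {t B : ZMod n} (A : ZMod n) (h : ∀ y, t * y + B ≠ 0) :
    Ssum n t A B = 0 := by
  rw [Ssum_eval_x]
  exact Finset.sum_eq_zero fun y _ => by rw [if_neg (h y)]

lemma Ssum_complete {t A B c1 c2 : ZMod n} (h1 : t * c1 = A) (h2 : t * c2 = B) :
    (∑ x : ZMod n, ∑ y : ZMod n, eZMod n (t * x * y))
      = Ssum n t A B * eZMod n (t * c1 * c2) := by
  have key : ∀ x y : ZMod n, eZMod n (t * (x + c1) * (y + c2))
      = eZMod n (t * x * y + A * y + B * x) * eZMod n (t * c1 * c2) := by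
    intro x y
    rw [← eZMod_add]
    congr 1
    rw [← h1, ← h2]
    ring
  calc ∑ x : ZMod n, ∑ y : ZMod n, eZMod n (t * x * y)
      = ∑ x : ZMod n, ∑ y : ZMod n, eZMod n (t * (x + c1) * (y + c2)) := by
        rw [← Equiv.sum_comp (Equiv.addRight c1)
          (fun x => ∑ y : ZMod n, eZMod n (t * x * y))]
        simp only [Equiv.coe_addRight]
        refine Finset.sum_congr rfl fun x _ => ?_
        rw [← Equiv.sum_comp (Equiv.addRight c2) (fun y => eZMod n (t * (x + c1) * y))]
        simp only [Equiv.coe_addRight]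
    _ = ∑ x : ZMod n, ∑ y : ZMod n,
          eZMod n (t * x * y + A * y + B * x) * eZMod n (t * c1 * c2) := by
        simp_rw [key]
    _ = _ := by
        simp_rw [← Finset.sum_mul]
        rfl

lemma Dsum_eval (t : ZMod n) :
    (∑ x : ZMod n, ∑ y : ZMod n, eZMod n (t * x * y))
      = (n : ℂ) * (Finset.univ.filter fun x : ZMod n => t * x = 0).card := by
  calc ∑ x : ZMod n, ∑ y : ZMod n, eZMod n (t * x * y)
      = ∑ x : ZMod n, (if t * x = 0 then (n : ℂ) else 0) := by
        refine Finset.sum_congr rfl fun x _ => ?_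
        rw [← sum_eZMod_mul (t * x)]
        refine Finset.sum_congr rfl fun y _ => ?_
        congr 1
        ring
    _ = _ := by
        rw [Finset.sum_ite, Finset.sum_const, Finset.sum_const_zero, add_zero,
          nsmul_eq_mul, mul_comm]

end helpers2

/-- The exponential sum `B_r(η)` for `η = (a₁,…,a_m,b₁,…,b_m)`, summing
`e((Σ aᵢvᵢ + Σ bᵢuᵢ)/p^r)` over `u, v ∈ (ℤ/p^rℤ)^m` with `Σ uᵢvᵢ ≡ 0 (mod p^r)`. -/
noncomputable def Bsum (p : ℕ) [NeZero p] (m r : ℕ) (a b : Fin m → ℤ) : ℂ :=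
  ∑ uv : (Fin m → ZMod (p ^ r)) × (Fin m → ZMod (p ^ r)),
    if (∑ i, uv.1 i * uv.2 i) = 0 then
      eZMod (p ^ r) (∑ i, ((a i : ZMod (p ^ r)) * uv.2 i + (b i : ZMod (p ^ r)) * uv.1 i))
    else 0

theorem Bsum_eval_middle_range (p : ℕ) (hp : p.Prime) [NeZero p] (m : ℕ) (hm : 1 ≤ m)
    (a b : Fin m → ℤ) (k k' : ℕ)
    (hq : (∑ i, a i * b i) ≠ 0)
    (hk1 : ∀ i, (p : ℤ) ^ k ∣ a i ∧ (p : ℤ) ^ k ∣ b i)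
    (hk2 : ¬ ∀ i, (p : ℤ) ^ (k + 1) ∣ a i ∧ (p : ℤ) ^ (k + 1) ∣ b i)
    (hkk' : padicValInt p (∑ i, a i * b i) = 2 * k + k')
    (r : ℕ) (hr1 : k < r) (hr2 : r ≤ k + k') :
    Bsum p m r a b = ∑ j ∈ Finset.range (k + 1),
      (p : ℂ) ^ ((r : ℤ) * (m : ℤ) - (r : ℤ) + (j : ℤ) * (m : ℤ)) *
        ((p : ℂ) ^ ((r : ℤ) - (j : ℤ)) - (p : ℂ) ^ ((r : ℤ) - (j : ℤ) - 1)) := by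
  classical
  haveI hfact : Fact p.Prime := ⟨hp⟩
  have hp0 : p ≠ 0 := hp.pos.ne'
  have hpC : (p : ℂ) ≠ 0 := by exact_mod_cast hp0
  have hNC : ((p ^ r : ℕ) : ℂ) ≠ 0 := by
    exact_mod_cast pow_ne_zero r hp0
  -- Step A
  have hA : ((p ^ r : ℕ) : ℂ) * Bsum p m r a b
      = ∑ t : ZMod (p ^ r), ∏ i, Ssum (p ^ r) t (a i : ZMod (p ^ r)) (b i : ZMod (p ^ r)) := by
    unfold Bsum
    rw [Finset.mul_sum]
    have step1 : ∀ uv : (Fin m → ZMod (p ^ r)) × (Fin m → ZMod (p ^ r)),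
        ((p ^ r : ℕ) : ℂ) * (if (∑ i, uv.1 i * uv.2 i) = 0 then
          eZMod (p ^ r) (∑ i, ((a i : ZMod (p ^ r)) * uv.2 i + (b i : ZMod (p ^ r)) * uv.1 i))
          else 0)
        = ∑ t : ZMod (p ^ r), ∏ i, eZMod (p ^ r)
            (t * uv.1 i * uv.2 i + ((a i : ZMod (p ^ r)) * uv.2 i
              + (b i : ZMod (p ^ r)) * uv.1 i)) := by
      intro uv
      have e1 : ∀ t : ZMod (p ^ r),
          (∏ i, eZMod (p ^ r) (t * uv.1 i * uv.2 i + ((a i : ZMod (p ^ r)) * uv.2 i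
            + (b i : ZMod (p ^ r)) * uv.1 i)))
          = eZMod (p ^ r) (t * (∑ i, uv.1 i * uv.2 i))
            * eZMod (p ^ r) (∑ i, ((a i : ZMod (p ^ r)) * uv.2 i
                + (b i : ZMod (p ^ r)) * uv.1 i)) := by
        intro t
        rw [← eZMod_sum, ← eZMod_add]
        congr 1
        rw [Finset.mul_sum, ← Finset.sum_add_distrib]
        refine Finset.sum_congr rfl fun i _ => ?_
        ring
      rw [Finset.sum_congr rfl fun t _ => e1 t, ← Finset.sum_mul, sum_eZMod_mul]
      split_ifs with h
      · rfl
      · rw [zero_mul, mul_zero]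
    rw [Finset.sum_congr rfl fun uv _ => step1 uv, Finset.sum_comm]
    refine Finset.sum_congr rfl fun t _ => ?_
    rw [← Equiv.sum_comp (Equiv.arrowProdEquivProdArrow (Fin m) (fun _ => ZMod (p ^ r)) (fun _ => ZMod (p ^ r)))
      (fun uv : (Fin m → ZMod (p ^ r)) × (Fin m → ZMod (p ^ r)) => ∏ i, eZMod (p ^ r)
        (t * uv.1 i * uv.2 i + ((a i : ZMod (p ^ r)) * uv.2 i
          + (b i : ZMod (p ^ r)) * uv.1 i)))]
    have hshape : (∑ f : Fin m → ZMod (p ^ r) × ZMod (p ^ r),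
        ∏ i, eZMod (p ^ r)
          (t * ((Equiv.arrowProdEquivProdArrow (Fin m) (fun _ => ZMod (p ^ r)) (fun _ => ZMod (p ^ r))) f).1 i
            * ((Equiv.arrowProdEquivProdArrow (Fin m) (fun _ => ZMod (p ^ r)) (fun _ => ZMod (p ^ r))) f).2 i
            + ((a i : ZMod (p ^ r))
                * ((Equiv.arrowProdEquivProdArrow (Fin m) (fun _ => ZMod (p ^ r)) (fun _ => ZMod (p ^ r))) f).2 i
              + (b i : ZMod (p ^ r))
                * ((Equiv.arrowProdEquivProdArrow (Fin m) (fun _ => ZMod (p ^ r)) (fun _ => ZMod (p ^ r))) f).1 i)))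
        = ∑ f : Fin m → ZMod (p ^ r) × ZMod (p ^ r), ∏ i,
            (fun i (z : ZMod (p ^ r) × ZMod (p ^ r)) => eZMod (p ^ r)
              (t * z.1 * z.2 + ((a i : ZMod (p ^ r)) * z.2 + (b i : ZMod (p ^ r)) * z.1)))
              i (f i) := rfl
    have hps := (Fintype.prod_sum (fun (i : Fin m) (z : ZMod (p ^ r) × ZMod (p ^ r)) =>
      eZMod (p ^ r) (t * z.1 * z.2 + ((a i : ZMod (p ^ r)) * z.2
        + (b i : ZMod (p ^ r)) * z.1)))).symm
    refine hshape.trans (hps.trans ?_)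
    refine Finset.prod_congr rfl fun i _ => ?_
    rw [Fintype.sum_prod_type]
    unfold Ssum
    refine Finset.sum_congr rfl fun x _ => Finset.sum_congr rfl fun y _ => ?_
    congr 1
    ring
  -- Step B
  have hB : ∀ t : ZMod (p ^ r),
      (∏ i, Ssum (p ^ r) t (a i : ZMod (p ^ r)) (b i : ZMod (p ^ r)))
      = if p ^ (k + 1) ∣ t.val then 0
        else (((p ^ r : ℕ) : ℂ) * ((p ^ padicValNat p t.val : ℕ) : ℂ)) ^ m := by
    intro t
    by_cases hdvd : p ^ (k + 1) ∣ t.val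
    · rw [if_pos hdvd]
      have hk2' : ∃ i, ¬ ((p : ℤ) ^ (k + 1) ∣ a i ∧ (p : ℤ) ^ (k + 1) ∣ b i) := by
        push_neg at hk2
        obtain ⟨i, hi⟩ := hk2
        exact ⟨i, fun h => (hi h.1) h.2⟩
      obtain ⟨i0, hi0⟩ := hk2'
      have hmain : ∀ c : ℤ, (∃ x : ZMod (p ^ r), t * x + (c : ZMod (p ^ r)) = 0)
          → (p : ℤ) ^ (k + 1) ∣ c := by
        rintro c ⟨x, hx⟩
        have hle : p ^ (k + 1) ∣ p ^ r := pow_dvd_pow p (by omega)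
        have hmap := congrArg (ZMod.castHom hle (ZMod (p ^ (k + 1)))) hx
        rw [map_add, map_mul, map_zero] at hmap
        have ht0 : (ZMod.castHom hle (ZMod (p ^ (k + 1)))) t = 0 := by
          conv_lhs => rw [← ZMod.natCast_zmod_val t]
          rw [map_natCast]
          exact (ZMod.natCast_eq_zero_iff _ _).mpr hdvd
        rw [ht0, zero_mul, zero_add, map_intCast] at hmap
        have := (ZMod.intCast_zmod_eq_zero_iff_dvd c (p ^ (k + 1))).mp hmap
        exact_mod_cast this
      apply Finset.prod_eq_zero (Finset.mem_univ i0)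
      rcases not_and_or.mp hi0 with ha | hb
      · exact Ssum_eq_zero_left _ (fun x hx => ha (hmain (a i0) ⟨x, hx⟩))
      · exact Ssum_eq_zero_right _ (fun y hy => hb (hmain (b i0) ⟨y, hy⟩))
    · rw [if_neg hdvd]
      have htv0 : t.val ≠ 0 := fun h => hdvd (h ▸ dvd_zero _)
      set g := padicValNat p t.val with hgdef
      have hpg : p ^ g ∣ t.val := pow_padicValNat_dvd
      have hpg1 : ¬ p ^ (g + 1) ∣ t.val := pow_succ_padicValNat_not_dvd htv0
      have hgk : g ≤ k := by
        by_contra hgt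
        exact hdvd (dvd_trans (pow_dvd_pow p (by omega)) hpg)
      have hgr : g < r := by omega
      obtain ⟨w, hw⟩ := hpg
      have hpw : ¬ p ∣ w := by
        intro hpw'
        apply hpg1
        rw [hw, pow_succ]
        exact mul_dvd_mul_left _ hpw'
      have hcop : Nat.Coprime w (p ^ r) :=
        Nat.Coprime.pow_right r ((Nat.Prime.coprime_iff_not_dvd hp).mpr hpw).symm
      set wu : (ZMod (p ^ r))ˣ := ZMod.unitOfCoprime w hcop with hwu
      set winv : ZMod (p ^ r) := ((wu⁻¹ : (ZMod (p ^ r))ˣ) : ZMod (p ^ r)) with hwinvdef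
      have hwinv : (w : ZMod (p ^ r)) * winv = 1 := by
        rw [hwinvdef, ← ZMod.coe_unitOfCoprime w hcop, ← hwu, ← Units.val_mul,
          mul_inv_cancel, Units.val_one]
      have htw : t = ((p ^ g : ℕ) : ZMod (p ^ r)) * (w : ZMod (p ^ r)) := by
        conv_lhs => rw [← ZMod.natCast_zmod_val t]
        rw [hw]
        push_cast
        ring
      have hdiva : ∀ i, (p : ℤ) ^ g ∣ a i := fun i => dvd_trans (pow_dvd_pow _ hgk) (hk1 i).1
      have hdivb : ∀ i, (p : ℤ) ^ g ∣ b i := fun i => dvd_trans (pow_dvd_pow _ hgk) (hk1 i).2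
      set a' : Fin m → ℤ := fun i => a i / (p : ℤ) ^ g with ha'def
      set b' : Fin m → ℤ := fun i => b i / (p : ℤ) ^ g with hb'def
      have ha' : ∀ i, (p : ℤ) ^ g * a' i = a i := fun i => Int.mul_ediv_cancel' (hdiva i)
      have hb' : ∀ i, (p : ℤ) ^ g * b' i = b i := fun i => Int.mul_ediv_cancel' (hdivb i)
      set c1 : Fin m → ZMod (p ^ r) := fun i => (a' i : ZMod (p ^ r)) * winv with hc1def
      set c2 : Fin m → ZMod (p ^ r) := fun i => (b' i : ZMod (p ^ r)) * winv with hc2def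
      have hc1 : ∀ i, t * c1 i = (a i : ZMod (p ^ r)) := by
        intro i
        calc t * c1 i
            = ((p ^ g : ℕ) : ZMod (p ^ r)) * (a' i : ZMod (p ^ r))
              * ((w : ZMod (p ^ r)) * winv) := by rw [htw, hc1def]; ring
          _ = ((p ^ g : ℕ) : ZMod (p ^ r)) * (a' i : ZMod (p ^ r)) := by rw [hwinv, mul_one]
          _ = (a i : ZMod (p ^ r)) := by rw [← ha' i]; push_cast; ring
      have hc2 : ∀ i, t * c2 i = (b i : ZMod (p ^ r)) := by
        intro i
        calc t * c2 i
            = ((p ^ g : ℕ) : ZMod (p ^ r)) * (b' i : ZMod (p ^ r))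
              * ((w : ZMod (p ^ r)) * winv) := by rw [htw, hc2def]; ring
          _ = ((p ^ g : ℕ) : ZMod (p ^ r)) * (b' i : ZMod (p ^ r)) := by rw [hwinv, mul_one]
          _ = (b i : ZMod (p ^ r)) := by rw [← hb' i]; push_cast; ring
      have hqfact : (∑ i, a i * b i) = (p : ℤ) ^ (2 * g) * ∑ i, a' i * b' i := by
        rw [Finset.mul_sum]
        refine Finset.sum_congr rfl fun i _ => ?_
        rw [← ha' i, ← hb' i, two_mul, pow_add]
        ring
      have hdvdq : (p : ℤ) ^ (r + g) ∣ ∑ i, a i * b i :=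
        (padicValInt_dvd_iff (r + g) (∑ i, a i * b i)).mpr (Or.inr (by rw [hkk']; omega))
      have hdvd' : (p : ℤ) ^ r ∣ (p : ℤ) ^ g * ∑ i, a' i * b' i := by
        have h2 : (p : ℤ) ^ (r + g) ∣ (p : ℤ) ^ (2 * g) * ∑ i, a' i * b' i :=
          hqfact ▸ hdvdq
        have hexp : (p : ℤ) ^ (r + g) = (p : ℤ) ^ (2 * g) * (p : ℤ) ^ (r - g) := by
          rw [← pow_add]; congr 1; omega
        have hg0 : ((p : ℤ) ^ (2 * g)) ≠ 0 := pow_ne_zero _ (by exact_mod_cast hp0)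
        have h3 : (p : ℤ) ^ (r - g) ∣ ∑ i, a' i * b' i :=
          (mul_dvd_mul_iff_left hg0).mp (by rw [← hexp]; exact h2)
        rw [show (p : ℤ) ^ r = (p : ℤ) ^ g * (p : ℤ) ^ (r - g) by rw [← pow_add]; congr 1; omega]
        exact mul_dvd_mul_left _ h3
      have hsum0 : (∑ i, t * c1 i * c2 i) = 0 := by
        have hterm : ∀ i, t * c1 i * c2 i
            = (((p : ℤ) ^ g * (a' i * b' i) : ℤ) : ZMod (p ^ r)) * winv := by
          intro i
          calc t * c1 i * c2 i
              = (((p ^ g : ℕ) : ZMod (p ^ r)) * (a' i : ZMod (p ^ r)) * (b' i : ZMod (p ^ r))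
                  * winv) * ((w : ZMod (p ^ r)) * winv) := by rw [htw, hc1def, hc2def]; ring
            _ = ((p ^ g : ℕ) : ZMod (p ^ r)) * (a' i : ZMod (p ^ r)) * (b' i : ZMod (p ^ r))
                  * winv := by rw [hwinv, mul_one]
            _ = _ := by push_cast; ring
        rw [Finset.sum_congr rfl fun i _ => hterm i, ← Finset.sum_mul]
        have hcast0 : ((∑ i, (p : ℤ) ^ g * (a' i * b' i) : ℤ) : ZMod (p ^ r)) = 0 := by
          rw [ZMod.intCast_zmod_eq_zero_iff_dvd]
          push_cast
          rw [← Finset.mul_sum]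
          exact hdvd'
        rw [← Int.cast_sum, hcast0, zero_mul]
      have hker : ∀ x : ZMod (p ^ r), t * x = 0 ↔ p ^ (r - g) ∣ x.val := by
        intro x
        have hmulcast : t * x = ((t.val * x.val : ℕ) : ZMod (p ^ r)) := by
          rw [Nat.cast_mul, ZMod.natCast_zmod_val, ZMod.natCast_zmod_val]
        have heq : p ^ r = p ^ g * p ^ (r - g) := by rw [← pow_add]; congr 1; omega
        constructor
        · intro hx
          have hdv : p ^ r ∣ t.val * x.val :=
            (ZMod.natCast_eq_zero_iff _ _).mp (hmulcast ▸ hx)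
          rw [hw, mul_assoc] at hdv
          have h1 : p ^ (r - g) ∣ w * x.val := by
            have hgpos : 0 < p ^ g := Nat.pos_of_ne_zero (pow_ne_zero _ hp0)
            exact (Nat.mul_dvd_mul_iff_left hgpos).mp (by rw [← heq]; exact hdv)
          have hcop' : Nat.Coprime (p ^ (r - g)) w :=
            Nat.Coprime.pow_left _ ((Nat.Prime.coprime_iff_not_dvd hp).mpr hpw)
          exact hcop'.dvd_of_dvd_mul_left h1
        · rintro ⟨c, hc⟩
          rw [hmulcast, ZMod.natCast_eq_zero_iff, hw, hc]
          exact ⟨w * c, by rw [heq]; ring⟩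
      have hcard : (Finset.univ.filter fun x : ZMod (p ^ r) => t * x = 0).card = p ^ g := by
        have hfe : (Finset.univ.filter fun x : ZMod (p ^ r) => t * x = 0)
            = Finset.univ.filter fun x : ZMod (p ^ r) => p ^ (r - g) ∣ x.val :=
          Finset.filter_congr fun x _ => by rw [hker x]
        rw [hfe]
        exact card_dvd_val_filter (by rw [← pow_add]; congr 1; omega)
      have hD : (∑ x : ZMod (p ^ r), ∑ y : ZMod (p ^ r), eZMod (p ^ r) (t * x * y))
          = ((p ^ r : ℕ) : ℂ) * ((p ^ g : ℕ) : ℂ) := by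
        rw [Dsum_eval t, hcard]
      have hDS : ∀ i : Fin m, ((p ^ r : ℕ) : ℂ) * ((p ^ g : ℕ) : ℂ)
          = Ssum (p ^ r) t (a i : ZMod (p ^ r)) (b i : ZMod (p ^ r))
            * eZMod (p ^ r) (t * c1 i * c2 i) := fun i => by
        rw [← hD]; exact Ssum_complete (hc1 i) (hc2 i)
      have hEprod : (∏ i, eZMod (p ^ r) (t * c1 i * c2 i)) = 1 := by
        rw [← eZMod_sum, hsum0]
        exact eZMod_zero
      calc (∏ i, Ssum (p ^ r) t (a i : ZMod (p ^ r)) (b i : ZMod (p ^ r)))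
          = (∏ i, Ssum (p ^ r) t (a i : ZMod (p ^ r)) (b i : ZMod (p ^ r)))
            * (∏ i, eZMod (p ^ r) (t * c1 i * c2 i)) := by rw [hEprod, mul_one]
        _ = ∏ i, (Ssum (p ^ r) t (a i : ZMod (p ^ r)) (b i : ZMod (p ^ r))
              * eZMod (p ^ r) (t * c1 i * c2 i)) := by rw [Finset.prod_mul_distrib]
        _ = ∏ _i : Fin m, (((p ^ r : ℕ) : ℂ) * ((p ^ g : ℕ) : ℂ)) :=
            Finset.prod_congr rfl fun i _ => (hDS i).symm
        _ = (((p ^ r : ℕ) : ℂ) * ((p ^ g : ℕ) : ℂ)) ^ m := by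
            rw [Finset.prod_const, Finset.card_univ, Fintype.card_fin]
  -- Step C
  have hpt : ∀ t : ZMod (p ^ r),
      (if p ^ (k + 1) ∣ t.val then 0
        else (((p ^ r : ℕ) : ℂ) * ((p ^ padicValNat p t.val : ℕ) : ℂ)) ^ m)
      = ∑ j ∈ Finset.range (k + 1),
          (if p ^ j ∣ t.val ∧ ¬ p ^ (j + 1) ∣ t.val
            then (((p ^ r : ℕ) : ℂ) * ((p ^ j : ℕ) : ℂ)) ^ m else 0) := by
    intro t
    by_cases hdvd : p ^ (k + 1) ∣ t.val
    · rw [if_pos hdvd]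
      symm
      refine Finset.sum_eq_zero fun j hj => ?_
      rw [if_neg]
      rintro ⟨-, hnd⟩
      have hjk : j < k + 1 := Finset.mem_range.mp hj
      exact hnd (dvd_trans (pow_dvd_pow p (by omega)) hdvd)
    · rw [if_neg hdvd]
      have htv0 : t.val ≠ 0 := fun h => hdvd (h ▸ dvd_zero _)
      set g := padicValNat p t.val with hgdef
      have hpg : p ^ g ∣ t.val := pow_padicValNat_dvd
      have hpg1 : ¬ p ^ (g + 1) ∣ t.val := pow_succ_padicValNat_not_dvd htv0
      have hgk : g ≤ k := by
        by_contra hgt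
        exact hdvd (dvd_trans (pow_dvd_pow p (by omega)) hpg)
      symm
      refine (Finset.sum_eq_single_of_mem g (Finset.mem_range.mpr (by omega)) ?_).trans ?_
      · intro j hj hne
        rw [if_neg]
        rintro ⟨hd1, hd2⟩
        rcases lt_or_gt_of_ne hne with hlt | hgt
        · exact hd2 (dvd_trans (pow_dvd_pow p (by omega)) hpg)
        · exact hpg1 (dvd_trans (pow_dvd_pow p (by omega)) hd1)
      · rw [if_pos ⟨hpg, hpg1⟩]
  have hcount : ∀ j, j < k + 1 →
      (Finset.univ.filter fun t : ZMod (p ^ r) =>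
        p ^ j ∣ t.val ∧ ¬ p ^ (j + 1) ∣ t.val).card
      = p ^ (r - j) - p ^ (r - j - 1) := by
    intro j hj
    have hsub : (Finset.univ.filter fun t : ZMod (p ^ r) => p ^ (j + 1) ∣ t.val)
        ⊆ Finset.univ.filter fun t : ZMod (p ^ r) => p ^ j ∣ t.val := by
      intro t ht
      simp only [Finset.mem_filter, Finset.mem_univ, true_and] at *
      exact dvd_trans (pow_dvd_pow p (by omega)) ht
    have hfe : (Finset.univ.filter fun t : ZMod (p ^ r) =>
          p ^ j ∣ t.val ∧ ¬ p ^ (j + 1) ∣ t.val)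
        = (Finset.univ.filter fun t : ZMod (p ^ r) => p ^ j ∣ t.val)
          \ (Finset.univ.filter fun t : ZMod (p ^ r) => p ^ (j + 1) ∣ t.val) := by
      ext t
      simp only [Finset.mem_filter, Finset.mem_sdiff, Finset.mem_univ, true_and]
    rw [hfe, Finset.card_sdiff_of_subset hsub,
      card_dvd_val_filter (show p ^ r = p ^ j * p ^ (r - j) by rw [← pow_add]; congr 1; omega),
      card_dvd_val_filter (show p ^ r = p ^ (j + 1) * p ^ (r - j - 1) by
        rw [← pow_add]; congr 1; omega)]
  -- Step D
  apply mul_left_cancel₀ hNC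
  rw [hA, Finset.sum_congr rfl fun t _ => (hB t).trans (hpt t), Finset.sum_comm,
    Finset.mul_sum]
  refine Finset.sum_congr rfl fun j hj => ?_
  have hjk : j < k + 1 := Finset.mem_range.mp hj
  rw [Finset.sum_ite, Finset.sum_const, Finset.sum_const_zero, add_zero, nsmul_eq_mul,
    hcount j hjk]
  have hle : p ^ (r - j - 1) ≤ p ^ (r - j) := Nat.pow_le_pow_right hp.pos (by omega)
  rw [Nat.cast_sub hle]
  push_cast
  have hrm : r ≤ r * m + j * m :=
    le_trans (Nat.le_mul_of_pos_right r (by omega)) (Nat.le_add_right _ _)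
  have E1 : (p : ℂ) ^ ((r : ℤ) * (m : ℤ) - (r : ℤ) + (j : ℤ) * (m : ℤ))
      = (p : ℂ) ^ (r * m + j * m - r : ℕ) := by
    rw [← zpow_natCast (p : ℂ) (r * m + j * m - r)]
    congr 1
    push_cast [Nat.cast_sub hrm]
    ring
  have E2 : (p : ℂ) ^ ((r : ℤ) - (j : ℤ)) = (p : ℂ) ^ (r - j : ℕ) := by
    rw [← zpow_natCast (p : ℂ) (r - j)]
    congr 1
    omega
  have E3 : (p : ℂ) ^ ((r : ℤ) - (j : ℤ) - 1) = (p : ℂ) ^ (r - j - 1 : ℕ) := by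
    rw [← zpow_natCast (p : ℂ) (r - j - 1)]
    congr 1
    omega
  rw [E1, E2, E3]
  have hkey : ((p : ℂ) ^ r * (p : ℂ) ^ j) ^ m = (p : ℂ) ^ r * (p : ℂ) ^ (r * m + j * m - r) := by
    rw [mul_pow, ← pow_mul, ← pow_mul, ← pow_add, ← pow_add, Nat.add_sub_cancel' hrm]
  rw [hkey]
  ring
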